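/- The function u(t,x) = x²/4 satisfies the equation t·∂u/∂t = u − (∂u/∂x)² for all t > 0 and x ∈ ℂ, and for this function limsup_{ρ→0⁺}[ lim_{σ→0⁺} (1/ρ²)·sup_{(t,x)∈(0,σ)×D_ρ}|u(t,x)| ] = 1/4; in particular this quantity is nonzero, so u(t,x) = x²/4 does not belong to the class 𝒳₁. -/
import Mathlib


open Set Filter MeasureTheory Metric Topology Complex

noncomputable section

/-- A *weight function* on `(0, T₀]`: increasing, continuous and positive on `(0,T₀]`,
with `∫₀^{T₀} m(τ)/τ dτ < ∞`. -/
def IsWeight (T₀ : ℝ) (m : ℝ → ℝ) : Prop :=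
  MonotoneOn m (Set.Ioc 0 T₀) ∧ ContinuousOn m (Set.Ioc 0 T₀) ∧
    (∀ t ∈ Set.Ioc (0 : ℝ) T₀, 0 < m t) ∧
    MeasureTheory.IntegrableOn (fun τ => m τ / τ) (Set.Ioc 0 T₀)

/-- `φ(t) = ∫₀ᵗ m(τ)/τ dτ`. -/
def wphi (m : ℝ → ℝ) (t : ℝ) : ℝ := ∫ τ in Set.Ioc (0 : ℝ) t, m τ / τ

/-- `f ∈ X₀(S × D_R)` : continuous on `S × D_R`, holomorphic in `x` for each fixed `t`. -/
def MemX0 (S : Set ℝ) (R : ℝ) (f : ℝ → ℂ → ℂ) : Prop :=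
  ContinuousOn (fun p : ℝ × ℂ => f p.1 p.2) (S ×ˢ Metric.ball (0 : ℂ) R) ∧
    ∀ t ∈ S, DifferentiableOn ℂ (f t) (Metric.ball (0 : ℂ) R)

/-- `f ∈ X₁(S × D_R)` : `f ∈ X₀`, with a `t`-derivative for `t > 0` such that
`t ∂f/∂t ∈ X₀`. -/
def MemX1 (S : Set ℝ) (R : ℝ) (f : ℝ → ℂ → ℂ) : Prop :=
  MemX0 S R f ∧
    ∃ g : ℝ → ℂ → ℂ, MemX0 S R g ∧
      ∀ t ∈ S, 0 < t → ∀ x ∈ Metric.ball (0 : ℂ) R,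
        HasDerivWithinAt (fun s => f s x) (g t x / (t : ℂ)) S t

/-- `u` solves equation (E) :
`t ∂u/∂t = a + λ u + b ∂u/∂x + Σ_{j+α≥2} a_{j,α} u^j (∂u/∂x)^α` on `(0,T] × D_R`. -/
def SolvesE (T R : ℝ) (a lam b : ℝ → ℂ → ℂ) (c : ℕ → ℕ → ℝ → ℂ → ℂ)
    (u : ℝ → ℂ → ℂ) : Prop :=
  ∀ t ∈ Set.Ioc (0 : ℝ) T, ∀ x ∈ Metric.ball (0 : ℂ) R,
    HasDerivWithinAt (fun s => u s x)
      ((a t x + lam t x * u t x + b t x * deriv (u t) x +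
          ∑' p : ℕ × ℕ, c p.1 p.2 t x * u t x ^ p.1 * deriv (u t) x ^ p.2) / (t : ℂ))
      (Set.Ioc 0 T) t

/-- `u` is a germ (near the origin) solution of equation (E). -/
def GermSol (T₀ R₀ : ℝ) (a lam b : ℝ → ℂ → ℂ) (c : ℕ → ℕ → ℝ → ℂ → ℂ)
    (u : ℝ → ℂ → ℂ) : Prop :=
  ∃ T, 0 < T ∧ T ≤ T₀ ∧ ∃ R, 0 < R ∧ R ≤ R₀ ∧ SolvesE T R a lam b c u

/-- the germ class `X₁^d`. -/
def MemX1d (d : ℝ) (u : ℝ → ℂ → ℂ) : Prop :=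
  ∃ T > (0 : ℝ), ∃ R > (0 : ℝ), MemX1 (Set.Icc 0 T) R u ∧
    ∃ C > (0 : ℝ), ∀ t ∈ Set.Icc (0 : ℝ) T, ∀ x ∈ Metric.ball (0 : ℂ) R,
      max ‖u t x‖ ‖deriv (u t) x‖ ≤ C * t ^ d

/-- the germ class `X₁⁺ = ⋃_{d>0} X₁^d`. -/
def MemX1plus (u : ℝ → ℂ → ℂ) : Prop := ∃ d > (0 : ℝ), MemX1d d u

/-- the germ class `X₁^{(μ)} = ⋂_{0<a<μ} X₁^a`. -/
def MemX1lt (μ : ℝ) (u : ℝ → ℂ → ℂ) : Prop := ∀ a : ℝ, 0 < a → a < μ → MemX1d a u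

/-- two functions agree as germs on some `(0,ε] × D_δ`. -/
def GermEqPos (u v : ℝ → ℂ → ℂ) : Prop :=
  ∃ ε > (0 : ℝ), ∃ δ > (0 : ℝ), ∀ t ∈ Set.Ioc (0 : ℝ) ε, ∀ x ∈ Metric.ball (0 : ℂ) δ,
    u t x = v t x

/-- the class `𝒳₁` (built on `X₁([0,T]×D_R)`) : the limsup-condition
`limsup_{ρ→0⁺} [ lim_{σ→0⁺} (1/ρ²) sup_{(0,σ)×D_ρ} |u| ] = 0`. -/
def MemXscrIcc (u : ℝ → ℂ → ℂ) : Prop :=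
  (∃ T > (0 : ℝ), ∃ R > (0 : ℝ), MemX1 (Set.Icc 0 T) R u) ∧
    ∀ ε > (0 : ℝ), ∃ ρ₁ > (0 : ℝ), ∀ ρ, 0 < ρ → ρ < ρ₁ →
      ∃ σ > (0 : ℝ), ∀ t, 0 < t → t < σ → ∀ x ∈ Metric.ball (0 : ℂ) ρ,
        ‖u t x‖ ≤ ε * ρ ^ 2

/-- the class `𝒳₁` (built on `X₁((0,T]×D_R)`). -/
def MemXscrIoc (u : ℝ → ℂ → ℂ) : Prop :=
  (∃ T > (0 : ℝ), ∃ R > (0 : ℝ), MemX1 (Set.Ioc 0 T) R u) ∧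
    ∀ ε > (0 : ℝ), ∃ ρ₁ > (0 : ℝ), ∀ ρ, 0 < ρ → ρ < ρ₁ →
      ∃ σ > (0 : ℝ), ∀ t, 0 < t → t < σ → ∀ x ∈ Metric.ball (0 : ℂ) ρ,
        ‖u t x‖ ≤ ε * ρ ^ 2

/-- `ψ` is holomorphic in a neighborhood of `x = 0`. -/
def HoloGerm (ψ : ℂ → ℂ) : Prop :=
  ∃ r > (0 : ℝ), DifferentiableOn ℂ ψ (Metric.ball (0 : ℂ) r)

/-- `t^{-λ(0,x)} w(t,x) → ψ(x)` as `t → 0⁺`, uniformly near `x = 0`,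
where `t^{-λ(0,x)} = exp(-λ(0,x) log t)`. -/
def BndLimit (lam0 : ℂ → ℂ) (w : ℝ → ℂ → ℂ) (ψ : ℂ → ℂ) : Prop :=
  ∃ δ > (0 : ℝ), TendstoUniformlyOn
    (fun t x => Complex.exp (-(lam0 x) * (Real.log t : ℂ)) * w t x) ψ
    (nhdsWithin 0 (Set.Ioi 0)) (Metric.ball (0 : ℂ) δ)

/-- `lim_{t→0⁺} sup_{x ∈ D_R} |t^{-d} u(t,x)| = 0`. -/
def SmalloOnBall (d R : ℝ) (u : ℝ → ℂ → ℂ) : Prop :=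
  ∀ ε > (0 : ℝ), ∃ τ > (0 : ℝ), ∀ t, 0 < t → t < τ → ∀ x ∈ Metric.ball (0 : ℂ) R,
    ‖u t x‖ ≤ ε * t ^ d

/-- `f ∈ X₀(W)` for a general domain `W ⊆ ℝ × ℂ`. -/
def MemX0W (W : Set (ℝ × ℂ)) (f : ℝ → ℂ → ℂ) : Prop :=
  ContinuousOn (fun p : ℝ × ℂ => f p.1 p.2) W ∧
    ∀ t : ℝ, DifferentiableOn ℂ (f t) {y : ℂ | (t, y) ∈ W}

/-- `f ∈ X₁(W)` for a general domain `W ⊆ ℝ × ℂ`. -/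
def MemX1W (W : Set (ℝ × ℂ)) (f : ℝ → ℂ → ℂ) : Prop :=
  MemX0W W f ∧
    ∃ g : ℝ → ℂ → ℂ, MemX0W W g ∧
      ∀ t x, (t, x) ∈ W → 0 < t →
        HasDerivWithinAt (fun s => f s x) (g t x / (t : ℂ)) {s : ℝ | (s, x) ∈ W} t

/-- `w` solves `t ∂w/∂t = λ w + b ∂w/∂x + g` on the domain `W`. -/
def SolvesLW (W : Set (ℝ × ℂ)) (lam b g w : ℝ → ℂ → ℂ) : Prop :=
  ∀ t x, (t, x) ∈ W → 0 < t →
    HasDerivWithinAt (fun s => w s x)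
      ((lam t x * w t x + b t x * deriv (w t) x + g t x) / (t : ℂ))
      {s : ℝ | (s, x) ∈ W} t

/-- `v` solves the homogeneous linear equation `t ∂v/∂t = λ v + b ∂v/∂x`
on the product domain `S × D_R`. -/
def SolvesLin (S : Set ℝ) (R : ℝ) (lam b : ℝ → ℂ → ℂ) (v : ℝ → ℂ → ℂ) : Prop :=
  ∀ t ∈ S, 0 < t → ∀ x ∈ Metric.ball (0 : ℂ) R,
    HasDerivWithinAt (fun s => v s x)
      ((lam t x * v t x + b t x * deriv (v t) x) / (t : ℂ)) S t

/-- the characteristic domain `𝒟 = ⋃_{x₀ ∈ D_{R₁}} {(t, φ(t;T,x₀)) : 0 < t ≤ T}`. -/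
def Dchar (T R₁ : ℝ) (Φ : ℝ → ℝ → ℂ → ℂ) : Set (ℝ × ℂ) :=
  {p : ℝ × ℂ | p.1 ∈ Set.Ioc (0 : ℝ) T ∧ ∃ x₀ ∈ Metric.ball (0 : ℂ) R₁, p.2 = Φ p.1 T x₀}

/-- the domain `W = {(t,x) ∈ [0,T] × D_R : φ(t)/r + |x| < R}`. -/
def Wset (m : ℝ → ℝ) (T R r : ℝ) : Set (ℝ × ℂ) :=
  {p : ℝ × ℂ | p.1 ∈ Set.Icc (0 : ℝ) T ∧ p.2 ∈ Metric.ball (0 : ℂ) R ∧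
    wphi m p.1 / r + ‖p.2‖ < R}

lemma aux_set (ρ σ : ℝ) (hρ : 0 < ρ) (hσ : 0 < σ) :
    {v : ℝ | ∃ t ∈ Set.Ioo (0:ℝ) σ, ∃ x ∈ Metric.ball (0:ℂ) ρ,
      v = ‖(x ^ 2 / 4 : ℂ)‖} = Set.Ico 0 (ρ ^ 2 / 4) := by
  ext v
  simp only [Set.mem_setOf_eq, Set.mem_Ico, Metric.mem_ball, dist_zero_right]
  constructor
  · rintro ⟨t, ht, x, hx, rfl⟩
    have h : ‖(x ^ 2 / 4 : ℂ)‖ = ‖x‖ ^ 2 / 4 := by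
      rw [norm_div, norm_pow]; norm_num
    rw [h]
    have hx0 : 0 ≤ ‖x‖ := norm_nonneg x
    constructor
    · positivity
    · nlinarith
  · rintro ⟨h0, h1⟩
    refine ⟨σ / 2, ⟨by linarith, by linarith⟩, (Real.sqrt (4 * v) : ℂ), ?_, ?_⟩
    · rw [Complex.norm_real, Real.norm_eq_abs, _root_.abs_of_nonneg (Real.sqrt_nonneg _)]
      have : Real.sqrt (4 * v) < Real.sqrt (ρ ^ 2) := by
        apply Real.sqrt_lt_sqrt (by linarith); nlinarith
      rwa [Real.sqrt_sq hρ.le] at this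
    · rw [norm_div, norm_pow, Complex.norm_real, Real.norm_eq_abs,
        _root_.abs_of_nonneg (Real.sqrt_nonneg _), Real.sq_sqrt (by linarith)]
      norm_num

/-- Example 2.6: `u(t,x) = x²/4` solves `t ∂u/∂t = u - (∂u/∂x)²`, and for it the
quantity `limsup_{ρ→0⁺}[ lim_{σ→0⁺} (1/ρ²) sup_{(0,σ)×D_ρ} |u| ]` equals `1/4 ≠ 0`;
in particular `x²/4 ∉ 𝒳₁`. -/
theorem statement19 :
    -- `x²/4` solves the equation `t ∂u/∂t = u - (∂u/∂x)²` for `t > 0` :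
    (∀ t : ℝ, 0 < t → ∀ x : ℂ,
      HasDerivAt (fun _ : ℝ => (x ^ 2 / 4 : ℂ))
        (((x ^ 2 / 4 : ℂ) - (deriv (fun y : ℂ => y ^ 2 / 4) x) ^ 2) / (t : ℂ)) t) ∧
    -- the inner limits exist and the limsup equals `1/4` :
    (∃ L : ℝ → ℝ,
      (∀ ρ : ℝ, 0 < ρ →
        Filter.Tendsto
          (fun σ : ℝ => (ρ ^ 2)⁻¹ *
            sSup {v : ℝ | ∃ t ∈ Set.Ioo (0:ℝ) σ, ∃ x ∈ Metric.ball (0:ℂ) ρ,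
              v = ‖(x ^ 2 / 4 : ℂ)‖})
          (nhdsWithin 0 (Set.Ioi 0)) (nhds (L ρ))) ∧
      Filter.limsup L (nhdsWithin 0 (Set.Ioi 0)) = 1 / 4) ∧
    (1 : ℝ) / 4 ≠ 0 ∧
    -- hence `x²/4` is not in the class `𝒳₁` :
    ¬ MemXscrIoc (fun _ x => x ^ 2 / 4) := by
  refine ⟨?_, ?_, by norm_num, ?_⟩
  · intro t ht x
    have hd : deriv (fun y : ℂ => y ^ 2 / 4) x = x / 2 := by
      rw [((hasDerivAt_pow 2 x).div_const 4).deriv]; push_cast; ring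
    have : ((x ^ 2 / 4 : ℂ) - (deriv (fun y : ℂ => y ^ 2 / 4) x) ^ 2) / (t : ℂ) = 0 := by
      rw [hd]; ring
    rw [this]
    exact hasDerivAt_const t _
  · refine ⟨fun _ => 1 / 4, fun ρ hρ => ?_, ?_⟩
    · apply Filter.Tendsto.congr' _ tendsto_const_nhds
      filter_upwards [self_mem_nhdsWithin] with σ (hσ : 0 < σ)
      rw [aux_set ρ σ hρ hσ, csSup_Ico (by positivity)]
      field_simp
    · exact Filter.limsup_const _
  · rintro ⟨-, h⟩
    obtain ⟨ρ₁, hρ₁, h⟩ := h (1/8) (by norm_num)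
    obtain ⟨σ, hσ, h⟩ := h (ρ₁/2) (by linarith) (by linarith)
    have := h (σ/2) (by linarith) (by linarith) ((0.9 * (ρ₁/2) : ℝ) : ℂ)
      (by rw [Metric.mem_ball, dist_zero_right, Complex.norm_real, Real.norm_eq_abs,
            abs_of_pos (by linarith)]; linarith)
    rw [norm_div, norm_pow, Complex.norm_real, Real.norm_eq_abs,
      abs_of_pos (by linarith : (0:ℝ) < 0.9 * (ρ₁/2))] at this
    have h4 : ‖(4:ℂ)‖ = 4 := by norm_num
    rw [h4] at this
    nlinarith
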